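/- Let A ∈ ℝ^{n×n} and λ > 0. Then ‖(A + λIₙ)⁻¹‖ ≤ 1/λ (with A + λIₙ invertible) if and only if AAᵀ + λ(A + Aᵀ) is positive semi-definite. -/

import Mathlib

open Matrix

noncomputable def euclideanOpNorm {m n : ℕ} (M : Matrix (Fin m) (Fin n) ℝ) : ℝ :=
  ‖LinearMap.toContinuousLinearMap (Matrix.toEuclideanLin M)‖

lemma euclideanOpNorm_transpose {n : ℕ} (M : Matrix (Fin n) (Fin n) ℝ) :
    euclideanOpNorm Mᵀ = euclideanOpNorm M := by
  have h : Mᵀ = Mᴴ := by ext i j; simp [Matrix.conjTranspose_apply]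
  rw [h]
  unfold euclideanOpNorm
  rw [Matrix.toEuclideanLin_conjTranspose_eq_adjoint,
    LinearMap.adjoint_toContinuousLinearMap]
  exact (LinearIsometryEquiv.norm_map ContinuousLinearMap.adjoint _)

lemma key_equiv {n : ℕ} (M : Matrix (Fin n) (Fin n) ℝ) (lam : ℝ) (hlam : 0 < lam) :
    (IsUnit M ∧ euclideanOpNorm M⁻¹ ≤ 1 / lam) ↔
      ∀ x : EuclideanSpace ℝ (Fin n), lam * ‖x‖ ≤ ‖Matrix.toEuclideanLin M x‖ := by
  constructor
  · rintro ⟨hu, hle⟩ x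
    have hinv : M⁻¹ * M = 1 := Matrix.nonsing_inv_mul M (Matrix.isUnit_iff_isUnit_det M |>.mp hu)
    have hx : Matrix.toEuclideanLin M⁻¹ (Matrix.toEuclideanLin M x) = x := by
      simp only [Matrix.toEuclideanLin_apply]
      simp [Matrix.mulVec_mulVec, hinv]
    have := (LinearMap.toContinuousLinearMap (Matrix.toEuclideanLin M⁻¹)).le_opNorm
      (Matrix.toEuclideanLin M x)
    rw [LinearMap.coe_toContinuousLinearMap'] at this
    rw [hx] at this
    have h2 : ‖x‖ ≤ (1/lam) * ‖Matrix.toEuclideanLin M x‖ :=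
      this.trans (mul_le_mul_of_nonneg_right hle (norm_nonneg _))
    calc lam * ‖x‖ ≤ lam * ((1/lam) * ‖Matrix.toEuclideanLin M x‖) :=
          mul_le_mul_of_nonneg_left h2 hlam.le
      _ = ‖Matrix.toEuclideanLin M x‖ := by field_simp
  · intro h
    have hinj : Function.Injective (Matrix.toEuclideanLin M) := by
      rw [injective_iff_map_eq_zero]
      intro x hx
      have := h x
      rw [hx, norm_zero] at this
      have : ‖x‖ ≤ 0 := by nlinarith [norm_nonneg x]
      exact norm_le_zero_iff.mp this
    have hu : IsUnit M := by
      rw [← Matrix.mulVec_injective_iff_isUnit]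
      intro v w hvw
      have : Matrix.toEuclideanLin M ((WithLp.equiv 2 _).symm v) =
          Matrix.toEuclideanLin M ((WithLp.equiv 2 _).symm w) := by
        simp [Matrix.toEuclideanLin_apply, hvw]
      simpa using hinj this
    refine ⟨hu, ?_⟩
    have hdet := Matrix.isUnit_iff_isUnit_det M |>.mp hu
    have hMinv : M * M⁻¹ = 1 := Matrix.mul_nonsing_inv M hdet
    apply ContinuousLinearMap.opNorm_le_bound _ (by positivity)
    intro y
    rw [LinearMap.coe_toContinuousLinearMap']
    set x := Matrix.toEuclideanLin M⁻¹ y with hxdef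
    have hy : Matrix.toEuclideanLin M x = y := by
      simp only [hxdef, Matrix.toEuclideanLin_apply]
      simp [Matrix.mulVec_mulVec, hMinv]
    have := h x
    rw [hy] at this
    calc ‖x‖ = (1/lam) * (lam * ‖x‖) := by field_simp
      _ ≤ 1/lam * ‖y‖ := mul_le_mul_of_nonneg_left this (by positivity)

lemma normsq_eq_dot {n : ℕ} (x : Fin n → ℝ) :
    ‖(WithLp.equiv 2 (Fin n → ℝ)).symm x‖^2 = x ⬝ᵥ x := by
  rw [← real_inner_self_eq_norm_sq]
  simp only [PiLp.inner_apply, dotProduct, WithLp.equiv_symm_apply, PiLp.toLp_apply, RCLike.inner_apply, conj_trivial, mul_comm]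

theorem resolvent_norm_iff_posSemidef {n : ℕ} (A : Matrix (Fin n) (Fin n) ℝ)
    (lam : ℝ) (hlam : 0 < lam) :
    (IsUnit (A + lam • (1 : Matrix (Fin n) (Fin n) ℝ)) ∧
        euclideanOpNorm (A + lam • (1 : Matrix (Fin n) (Fin n) ℝ))⁻¹ ≤ 1 / lam) ↔
      Matrix.PosSemidef (A * Aᵀ + lam • (A + Aᵀ)) := by
  set B := A + lam • (1 : Matrix (Fin n) (Fin n) ℝ) with hB
  have hid : B * Bᵀ = A * Aᵀ + lam • (A + Aᵀ) + (lam*lam) • (1 : Matrix (Fin n) (Fin n) ℝ) := by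
    rw [hB]
    simp only [Matrix.transpose_add, Matrix.transpose_smul, Matrix.transpose_one,
      Matrix.add_mul, Matrix.mul_add, Matrix.smul_mul, Matrix.mul_smul, mul_one, one_mul,
      smul_smul, smul_add]
    abel
  have hnorm : euclideanOpNorm B⁻¹ = euclideanOpNorm (Bᵀ)⁻¹ := by
    rw [← Matrix.transpose_nonsing_inv, euclideanOpNorm_transpose]
  have hquad : ∀ x : Fin n → ℝ,
      x ⬝ᵥ ((B * Bᵀ) *ᵥ x) = (Bᵀ *ᵥ x) ⬝ᵥ (Bᵀ *ᵥ x) := by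
    intro x
    rw [← Matrix.mulVec_mulVec, Matrix.dotProduct_mulVec, ← Matrix.mulVec_transpose]
  have hexp : ∀ x : Fin n → ℝ,
      x ⬝ᵥ ((B * Bᵀ) *ᵥ x) =
        x ⬝ᵥ ((A * Aᵀ + lam • (A + Aᵀ)) *ᵥ x) + (lam*lam) * (x ⬝ᵥ x) := by
    intro x
    rw [hid]
    simp [Matrix.add_mulVec, Matrix.smul_mulVec, dotProduct_add, dotProduct_smul,
      Matrix.one_mulVec, smul_eq_mul]
  have hnormBd : ∀ x : Fin n → ℝ,
      (lam * ‖(WithLp.equiv 2 (Fin n → ℝ)).symm x‖ ≤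
        ‖Matrix.toEuclideanLin Bᵀ ((WithLp.equiv 2 (Fin n → ℝ)).symm x)‖) ↔
      lam * lam * (x ⬝ᵥ x) ≤ (Bᵀ *ᵥ x) ⬝ᵥ (Bᵀ *ᵥ x) := by
    intro x
    rw [show Matrix.toEuclideanLin Bᵀ ((WithLp.equiv 2 (Fin n → ℝ)).symm x) = (WithLp.equiv 2 (Fin n → ℝ)).symm (Bᵀ *ᵥ x) from Matrix.toEuclideanLin_apply_piLp_toLp _ _]
    have h1 := normsq_eq_dot x
    have h2 := normsq_eq_dot (Bᵀ *ᵥ x)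
    have hn1 : (0:ℝ) ≤ ‖(WithLp.equiv 2 (Fin n → ℝ)).symm x‖ := norm_nonneg _
    have hn2 : (0:ℝ) ≤ ‖(WithLp.equiv 2 (Fin n → ℝ)).symm (Bᵀ *ᵥ x)‖ := norm_nonneg _
    constructor
    · intro hle
      have hmul := mul_le_mul hle hle (by positivity) hn2
      nlinarith
    · intro hle
      have hsq : (lam * ‖(WithLp.equiv 2 (Fin n → ℝ)).symm x‖)^2 ≤
          ‖(WithLp.equiv 2 (Fin n → ℝ)).symm (Bᵀ *ᵥ x)‖^2 := by nlinarith
      have := Real.sqrt_le_sqrt hsq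
      rwa [Real.sqrt_sq (by positivity), Real.sqrt_sq hn2] at this
  rw [← Matrix.isUnit_transpose, hnorm, key_equiv Bᵀ lam hlam, Matrix.posSemidef_iff_dotProduct_mulVec]
  constructor
  · intro h
    constructor
    · have hct : ∀ M : Matrix (Fin n) (Fin n) ℝ, Mᴴ = Mᵀ := by
        intro M; ext i j; simp [Matrix.conjTranspose_apply]
      show _ = _
      rw [hct]
      simp only [Matrix.transpose_add, Matrix.transpose_mul, Matrix.transpose_smul,
        Matrix.transpose_transpose]
      abel
    · intro x
      rw [star_trivial]
      have := (hnormBd x).mp (h _)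
      have he := hexp x
      have hq := hquad x
      linarith
  · intro h x
    have h2 := h.2 (WithLp.equiv 2 (Fin n → ℝ) x)
    rw [star_trivial] at h2
    have heq : (WithLp.equiv 2 (Fin n → ℝ)).symm (WithLp.equiv 2 (Fin n → ℝ) x) = x :=
      (WithLp.equiv 2 (Fin n → ℝ)).symm_apply_apply x
    have := (hnormBd (WithLp.equiv 2 (Fin n → ℝ) x)).mpr (by
      have he := hexp (WithLp.equiv 2 (Fin n → ℝ) x)
      have hq := hquad (WithLp.equiv 2 (Fin n → ℝ) x)
      linarith)
    rwa [heq] at this
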